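/- (Left-cancellation law for ⊕) Let A, B, C be st-flow graphs. If A ⊕ B = A ⊕ C, then B = C. -/

import Mathlib

/-- A flow graph: a finite directed multigraph (loops and parallel edges allowed)
with a distinguished source vertex `s` and target vertex `t`.
(Connectedness is stated as a separate predicate `FlowGraph.Connected`.) -/
structure FlowGraph where
  V : Type
  E : Type
  [finV : Finite V]
  [finE : Finite E]
  src : E → V
  tgt : E → V
  s : V
  t : V

attribute [instance] FlowGraph.finV FlowGraph.finE

namespace FlowGraph

/-- Adjacency in the underlying undirected multigraph, using only edges in `ES`. -/
def adjOn (A : FlowGraph) (ES : Set A.E) (u v : A.V) : Prop :=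
  ∃ e ∈ ES, (A.src e = u ∧ A.tgt e = v) ∨ (A.src e = v ∧ A.tgt e = u)

/-- Reachability in the underlying undirected multigraph, using only edges in `ES`. -/
def reachOn (A : FlowGraph) (ES : Set A.E) : A.V → A.V → Prop :=
  Relation.ReflTransGen (A.adjOn ES)

/-- The multigraph underlying a flow graph is connected. -/
def Connected (A : FlowGraph) : Prop := ∀ u v : A.V, A.reachOn Set.univ u v

/-- Isomorphism of flow graphs: a graph isomorphism mapping source to source
and target to target.  Equality "as flow graphs" means `Iso`. -/
def Iso (A B : FlowGraph) : Prop :=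
  ∃ (φV : A.V ≃ B.V) (φE : A.E ≃ B.E),
    (∀ e, B.src (φE e) = φV (A.src e)) ∧
    (∀ e, B.tgt (φE e) = φV (A.tgt e)) ∧
    φV A.s = B.s ∧ φV A.t = B.t

/-- The relation identifying `t_A` with `s_B` in the disjoint union of vertex sets. -/
def addRel (A B : FlowGraph) : (A.V ⊕ B.V) → (A.V ⊕ B.V) → Prop :=
  fun x y => x = Sum.inl A.t ∧ y = Sum.inr B.s

/-- The sum `A ⊕ B` of flow graphs: disjoint copies of `A` and `B`
with `t_A` identified with `s_B`; source `s_A`, target `t_B`. -/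
def add (A B : FlowGraph) : FlowGraph where
  V := Quot (addRel A B)
  E := A.E ⊕ B.E
  src := fun e =>
    Quot.mk _ (Sum.elim (fun a => Sum.inl (A.src a)) (fun b => Sum.inr (B.src b)) e)
  tgt := fun e =>
    Quot.mk _ (Sum.elim (fun a => Sum.inl (A.tgt a)) (fun b => Sum.inr (B.tgt b)) e)
  s := Quot.mk _ (Sum.inl A.s)
  t := Quot.mk _ (Sum.inr B.t)

/-- The relation gluing, for every edge `e = (u,v)` of `A`, the source of the
`e`-th copy of `B` to `u` and its target to `v`. -/
def mulRel (A B : FlowGraph) : (A.V ⊕ A.E × B.V) → (A.V ⊕ A.E × B.V) → Prop :=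
  fun x y => ∃ e : A.E,
    (x = Sum.inr (e, B.s) ∧ y = Sum.inl (A.src e)) ∨
    (x = Sum.inr (e, B.t) ∧ y = Sum.inl (A.tgt e))

/-- The product `A ⊗ B` of flow graphs: every directed edge `e = (u,v)` of `A` is
replaced by a fresh copy of `B`, with `u` identified with the source of the copy
and `v` with its target; source `s_A`, target `t_A`. -/
def mul (A B : FlowGraph) : FlowGraph where
  V := Quot (mulRel A B)
  E := A.E × B.E
  src := fun p => Quot.mk _ (Sum.inr (p.1, B.src p.2))
  tgt := fun p => Quot.mk _ (Sum.inr (p.1, B.tgt p.2))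
  s := Quot.mk _ (Sum.inl A.s)
  t := Quot.mk _ (Sum.inl A.t)

/-- The trivial flow graph `F₀`: one vertex, no edges, source = target. -/
def F0 : FlowGraph where
  V := Unit
  E := Empty
  src := Empty.elim
  tgt := Empty.elim
  s := ()
  t := ()

/-- The flow graph `F₁`: a single directed edge from source to target. -/
def F1 : FlowGraph where
  V := Bool
  E := Unit
  src := fun _ => false
  tgt := fun _ => true
  s := false
  t := true

/-- The graphical natural number `n`: the directed path with `n+1` vertices and
`n` edges, source its initial vertex and target its final vertex. -/
def pathGraph (n : ℕ) : FlowGraph where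
  V := Fin (n + 1)
  E := Fin n
  src := fun e => e.castSucc
  tgt := fun e => e.succ
  s := 0
  t := Fin.last n

/-- A flow graph is infinitesimal if it is nontrivial and its source equals its target. -/
def Infinitesimal (A : FlowGraph) : Prop := ¬ A.Iso F0 ∧ A.s = A.t

/-- `w` is a splitting vertex of `A`: `w ≠ s_A, t_A`, and after deleting `w`
(i.e. using only edges not incident to `w`), `s_A` and `t_A` lie in distinct
components (hence deletion produces at least two components). -/
def IsSplittingVertex (A : FlowGraph) (w : A.V) : Prop :=
  w ≠ A.s ∧ w ≠ A.t ∧ ¬ A.reachOn {e | A.src e ≠ w ∧ A.tgt e ≠ w} A.s A.t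

/-- `e₀` is a splitting edge of `A`: deleting `e₀` leaves exactly two components,
one containing `s_A` and the other containing `t_A`. -/
def IsSplittingEdge (A : FlowGraph) (e₀ : A.E) : Prop :=
  ¬ A.reachOn {e | e ≠ e₀} A.s A.t ∧
  ∀ v : A.V, A.reachOn {e | e ≠ e₀} v A.s ∨ A.reachOn {e | e ≠ e₀} v A.t

/-- The initial vertex of a directed edge traversed with direction `dir`
(`true` = forwards, `false` = backwards). -/
def stepSrc (A : FlowGraph) (p : A.E × Bool) : A.V := if p.2 then A.src p.1 else A.tgt p.1

/-- The final vertex of a directed edge traversed with direction `dir`. -/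
def stepTgt (A : FlowGraph) (p : A.E × Bool) : A.V := if p.2 then A.tgt p.1 else A.src p.1

/-- `l` is a walk from `u` to `v` in the underlying undirected multigraph:
a list of edges each traversed in some direction, consecutively matching. -/
def IsWalk (A : FlowGraph) : A.V → A.V → List (A.E × Bool) → Prop
  | u, v, [] => u = v
  | u, v, p :: l => A.stepSrc p = u ∧ A.IsWalk (A.stepTgt p) v l

/-- The list of vertices visited by a walk starting at `u`. -/
def walkVertices (A : FlowGraph) (u : A.V) : List (A.E × Bool) → List A.V
  | [] => [u]
  | p :: l => u :: A.walkVertices (A.stepTgt p) l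

/-- The edge `e` has the ST property: some non-self-intersecting path from `s_A`
to `t_A` in the underlying undirected multigraph traverses `e`. -/
def HasST (A : FlowGraph) (e : A.E) : Prop :=
  ∃ l : List (A.E × Bool), A.IsWalk A.s A.t l ∧ (A.walkVertices A.s l).Nodup ∧
    ∃ dir : Bool, (e, dir) ∈ l

/-- `A` is an st-flow graph: every edge has the ST property. -/
def IsSTGraph (A : FlowGraph) : Prop := ∀ e : A.E, A.HasST e

/-- The vertex set of the st-core: `s_A`, `t_A`, and all endpoints of ST edges. -/
def stCoreV (A : FlowGraph) : Set A.V :=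
  {v | v = A.s ∨ v = A.t ∨ ∃ e, A.HasST e ∧ (A.src e = v ∨ A.tgt e = v)}

/-- The st-core of `A`: delete all edges without the ST property and keep the
subgraph induced by the remaining edges together with `s_A` and `t_A`. -/
def stCore (A : FlowGraph) : FlowGraph where
  V := {v // v ∈ A.stCoreV}
  E := {e // A.HasST e}
  src := fun e => ⟨A.src e.1, Or.inr (Or.inr ⟨e.1, e.2, Or.inl rfl⟩)⟩
  tgt := fun e => ⟨A.tgt e.1, Or.inr (Or.inr ⟨e.1, e.2, Or.inr rfl⟩)⟩
  s := ⟨A.s, Or.inl rfl⟩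
  t := ⟨A.t, Or.inr (Or.inl rfl)⟩

/-- An embedding of (the multigraph of) `A` into (the multigraph of) `B`:
injective on vertices and on edges, preserving directed incidence. -/
structure Emb (A B : FlowGraph) where
  vmap : A.V → B.V
  emap : A.E → B.E
  vinj : Function.Injective vmap
  einj : Function.Injective emap
  src_map : ∀ e, B.src (emap e) = vmap (A.src e)
  tgt_map : ∀ e, B.tgt (emap e) = vmap (A.tgt e)

/-- `(V₁, E₁)` is a subgraph: all endpoints of edges in `E₁` lie in `V₁`. -/
def IsSubgraph (A : FlowGraph) (VS : Set A.V) (ES : Set A.E) : Prop :=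
  ∀ e ∈ ES, A.src e ∈ VS ∧ A.tgt e ∈ VS

/-- The subgraph `(VS, ES)` is connected. -/
def SubConnected (A : FlowGraph) (VS : Set A.V) (ES : Set A.E) : Prop :=
  ∀ u ∈ VS, ∀ v ∈ VS, A.reachOn ES u v

/-- An `(s,t)`-splitting of `A`: two connected subgraphs, the first containing
`s_A`, the second containing `t_A`, whose edge sets partition the edges of `A`. -/
def IsSplitting (A : FlowGraph) (V₁ V₂ : Set A.V) (E₁ E₂ : Set A.E) : Prop :=
  A.IsSubgraph V₁ E₁ ∧ A.IsSubgraph V₂ E₂ ∧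
  A.SubConnected V₁ E₁ ∧ A.SubConnected V₂ E₂ ∧
  A.s ∈ V₁ ∧ A.t ∈ V₂ ∧
  E₁ ∪ E₂ = Set.univ ∧ E₁ ∩ E₂ = ∅

/-- The weak order `A ⩽ B`: there is an `(s,t)`-splitting `(H₁, H₂)` of `A` and
graph embeddings `φᵢ : Hᵢ → B` with `φ₁ s_A = s_B`, `φ₂ t_A = t_B`, and whose
edge images are disjoint. -/
def weakLE (A B : FlowGraph) : Prop :=
  ∃ (V₁ V₂ : Set A.V) (E₁ E₂ : Set A.E)
    (φ₁V φ₂V : A.V → B.V) (φ₁E φ₂E : A.E → B.E),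
    A.IsSplitting V₁ V₂ E₁ E₂ ∧
    Set.InjOn φ₁V V₁ ∧ Set.InjOn φ₂V V₂ ∧
    Set.InjOn φ₁E E₁ ∧ Set.InjOn φ₂E E₂ ∧
    (∀ e ∈ E₁, B.src (φ₁E e) = φ₁V (A.src e) ∧ B.tgt (φ₁E e) = φ₁V (A.tgt e)) ∧
    (∀ e ∈ E₂, B.src (φ₂E e) = φ₂V (A.src e) ∧ B.tgt (φ₂E e) = φ₂V (A.tgt e)) ∧
    φ₁V A.s = B.s ∧ φ₂V A.t = B.t ∧
    (φ₁E '' E₁) ∩ (φ₂E '' E₂) = ∅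

/-- `k`-fold sum `C ⊕ C ⊕ ⋯ ⊕ C` (`k` summands); `smul 0 C = F₀`. -/
def smul : ℕ → FlowGraph → FlowGraph
  | 0, _ => F0
  | n + 1, C => C.add (smul n C)

/-- Sum of a head flow graph with a list of further summands:
`sumList A₀ [A₁, …, Aₖ] = A₀ ⊕ A₁ ⊕ ⋯ ⊕ Aₖ`. -/
def sumList (A : FlowGraph) (L : List FlowGraph) : FlowGraph := L.foldl add A

/-- `A` is ⊕-irreducible: it is not (isomorphic to) a sum of two nontrivial flow graphs. -/
def IsIrreducible (A : FlowGraph) : Prop :=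
  ¬ ∃ B C : FlowGraph, B.Connected ∧ C.Connected ∧
      ¬ B.Iso F0 ∧ ¬ C.Iso F0 ∧ A.Iso (B.add C)

end FlowGraph

/-!
Let `w` be the vertex at which the summands of `A ⊕ B` are glued.  Deleting `w` cuts off from the
target exactly the vertices of `A`, and from the source exactly those of `B`: the st-property lets
every other vertex of `B` reach `t`, and every other vertex of `A` reach `s`, around `w`.  As it
also rules out loops, the edges with both ends cut off are then exactly the edges of `A`
(resp. `B`).  Deleting a vertex of `A ⊕ C` inside `A` instead cuts off from `t` only part of the
edges of `A` (an edge at the glue vertex survives), and deleting one inside `C` cuts off from `s`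
only part of the edges of `C`, of which there are as many as of `B`.  So an isomorphism
`A ⊕ B ≅ A ⊕ C` maps glue vertex to glue vertex, and hence the part of `A ⊕ B` not cut off from
`t` by it, which is `B`, onto the corresponding part `C` of `A ⊕ C`.
-/

noncomputable def Equiv.ofRangesMatch {α β X Y : Type*} {f : α → X} {g : β → Y}
    (hf : Function.Injective f) (hg : Function.Injective g) (e : X ≃ Y)
    (he : ∀ x, x ∈ Set.range f ↔ e x ∈ Set.range g) : α ≃ β :=
  (Equiv.ofInjective f hf).trans ((e.subtypeEquiv he).trans (Equiv.ofInjective g hg).symm)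

lemma Equiv.apply_ofRangesMatch {α β X Y : Type*} {f : α → X} {g : β → Y}
    (hf : Function.Injective f) (hg : Function.Injective g) (e : X ≃ Y)
    (he : ∀ x, x ∈ Set.range f ↔ e x ∈ Set.range g) (a : α) :
    g (Equiv.ofRangesMatch hf hg e he a) = e (f a) := by
  simp [Equiv.ofRangesMatch, Equiv.apply_ofInjective_symm]

namespace FlowGraph

open Relation Set

variable {A B C : FlowGraph}

section Reachability

lemma adjOn_symm {ES : Set A.E} {u v : A.V} (h : A.adjOn ES u v) : A.adjOn ES v u := by
  obtain ⟨e, he, h | h⟩ := h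
  exacts [⟨e, he, Or.inr h⟩, ⟨e, he, Or.inl h⟩]

lemma reachOn_symm {ES : Set A.E} {u v : A.V} (h : A.reachOn ES u v) : A.reachOn ES v u := by
  induction h with
  | refl => exact ReflTransGen.refl
  | tail _ hadj ih => exact ReflTransGen.head (adjOn_symm hadj) ih

lemma reachOn_mem_of_forall_iff {ES : Set A.E} {P : Set A.V}
    (hP : ∀ e ∈ ES, A.src e ∈ P ↔ A.tgt e ∈ P) {u v : A.V} (h : A.reachOn ES u v)
    (hu : u ∈ P) : v ∈ P := by
  induction h with
  | refl => exact hu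
  | tail _ hadj ih =>
    obtain ⟨e, he, ⟨hs, ht⟩ | ⟨hs, ht⟩⟩ := hadj
    · exact ht ▸ (hP e he).1 (hs ▸ ih)
    · exact hs ▸ (hP e he).2 (ht ▸ ih)

lemma Connected.exists_incident (hA : A.Connected) {u v : A.V} (h : u ≠ v) :
    ∃ e, A.src e = u ∨ A.tgt e = u := by
  rcases (hA u v).cases_head with huv | ⟨_, ⟨e, -, ⟨hs, -⟩ | ⟨-, ht⟩⟩, -⟩
  exacts [absurd huv h, ⟨e, Or.inl hs⟩, ⟨e, Or.inr ht⟩]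

lemma Connected.eq_of_isEmpty (hA : A.Connected) [IsEmpty A.E] (u v : A.V) : u = v := by
  by_contra huv
  obtain ⟨e, -⟩ := hA.exists_incident huv
  exact isEmptyElim e

lemma Emb.reachOn_map (f : Emb A B) {ES : Set A.E} {ES' : Set B.E}
    (hE : ∀ e ∈ ES, f.emap e ∈ ES') {u v : A.V} (h : A.reachOn ES u v) :
    B.reachOn ES' (f.vmap u) (f.vmap v) := by
  induction h with
  | refl => exact ReflTransGen.refl
  | tail _ hadj ih =>
    obtain ⟨e, he, ⟨hs, ht⟩ | ⟨hs, ht⟩⟩ := hadj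
    · exact ih.tail ⟨f.emap e, hE e he, Or.inl ⟨by rw [f.src_map, hs], by rw [f.tgt_map, ht]⟩⟩
    · exact ih.tail ⟨f.emap e, hE e he, Or.inr ⟨by rw [f.src_map, hs], by rw [f.tgt_map, ht]⟩⟩

end Reachability

section CutOff

def avoiding (A : FlowGraph) (z : A.V) : Set A.E := {e | A.src e ≠ z ∧ A.tgt e ≠ z}

lemma mem_avoiding {z : A.V} {e : A.E} : e ∈ A.avoiding z ↔ A.src e ≠ z ∧ A.tgt e ≠ z :=
  Iff.rfl

def cutOff (A : FlowGraph) (z x : A.V) : Set A.V := {u | ¬ A.reachOn (A.avoiding z) u x}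

def cutOffEdges (A : FlowGraph) (z x : A.V) : Set A.E :=
  {e | A.src e ∈ A.cutOff z x ∧ A.tgt e ∈ A.cutOff z x}

lemma mem_cutOffEdges {z x : A.V} {e : A.E} :
    e ∈ A.cutOffEdges z x ↔ A.src e ∈ A.cutOff z x ∧ A.tgt e ∈ A.cutOff z x :=
  Iff.rfl

lemma self_mem_cutOff {z x : A.V} (h : z ≠ x) : z ∈ A.cutOff z x := by
  intro hr
  rcases hr.cases_head with hzx | ⟨_, ⟨e, he, ⟨hs, -⟩ | ⟨-, ht⟩⟩, -⟩
  exacts [h hzx, he.1 hs, he.2 ht]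

lemma Emb.reachOn_avoiding (f : Emb A B) {z : A.V} {z' : B.V}
    (hz : ∀ y, f.vmap y = z' → y = z) {u v : A.V} (h : A.reachOn (A.avoiding z) u v) :
    B.reachOn (B.avoiding z') (f.vmap u) (f.vmap v) :=
  f.reachOn_map (fun e he => mem_avoiding.2
    ⟨by rw [f.src_map]; exact fun h' => he.1 (hz _ h'),
      by rw [f.tgt_map]; exact fun h' => he.2 (hz _ h')⟩) h

lemma Emb.reachOn_avoiding_of_forall_ne (f : Emb A B) {z' : B.V} (hz : ∀ y, f.vmap y ≠ z')
    {ES : Set A.E} {u v : A.V} (h : A.reachOn ES u v) : B.reachOn (B.avoiding z') (f.vmap u) (f.vmap v) :=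
  f.reachOn_map (fun e _ => mem_avoiding.2
    ⟨by rw [f.src_map]; exact hz _, by rw [f.tgt_map]; exact hz _⟩) h

structure GraphIso (A B : FlowGraph) where
  vEquiv : A.V ≃ B.V
  eEquiv : A.E ≃ B.E
  src_map : ∀ e, B.src (eEquiv e) = vEquiv (A.src e)
  tgt_map : ∀ e, B.tgt (eEquiv e) = vEquiv (A.tgt e)

def GraphIso.symm (φ : GraphIso A B) : GraphIso B A where
  vEquiv := φ.vEquiv.symm
  eEquiv := φ.eEquiv.symm
  src_map e := by rw [Equiv.eq_symm_apply, ← φ.src_map, Equiv.apply_symm_apply]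
  tgt_map e := by rw [Equiv.eq_symm_apply, ← φ.tgt_map, Equiv.apply_symm_apply]

def GraphIso.toEmb (φ : GraphIso A B) : Emb A B :=
  ⟨φ.vEquiv, φ.eEquiv, φ.vEquiv.injective, φ.eEquiv.injective, φ.src_map, φ.tgt_map⟩

lemma GraphIso.mem_cutOff_iff (φ : GraphIso A B) {z x u : A.V} :
    φ.vEquiv u ∈ B.cutOff (φ.vEquiv z) (φ.vEquiv x) ↔ u ∈ A.cutOff z x := by
  refine not_congr ⟨fun h => ?_, φ.toEmb.reachOn_avoiding fun _ hy => φ.vEquiv.injective hy⟩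
  simpa [GraphIso.symm, GraphIso.toEmb] using
    φ.symm.toEmb.reachOn_avoiding (fun _ hy => (Equiv.symm_apply_eq _).1 hy) h

lemma GraphIso.mem_cutOffEdges_iff (φ : GraphIso A B) {z x : A.V} {e : A.E} :
    φ.eEquiv e ∈ B.cutOffEdges (φ.vEquiv z) (φ.vEquiv x) ↔ e ∈ A.cutOffEdges z x := by
  rw [mem_cutOffEdges, mem_cutOffEdges, φ.src_map, φ.tgt_map, φ.mem_cutOff_iff,
    φ.mem_cutOff_iff]

lemma GraphIso.ncard_cutOffEdges (φ : GraphIso A B) (z x : A.V) :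
    (B.cutOffEdges (φ.vEquiv z) (φ.vEquiv x)).ncard = (A.cutOffEdges z x).ncard := by
  have hpre : φ.eEquiv ⁻¹' B.cutOffEdges (φ.vEquiv z) (φ.vEquiv x) = A.cutOffEdges z x :=
    Set.ext fun _ => φ.mem_cutOffEdges_iff
  rw [← hpre, ncard_preimage_of_injective_subset_range φ.eEquiv.injective (by simp)]

end CutOff

section Walks

lemma walkVertices_eq_cons (u : A.V) (l : List (A.E × Bool)) :
    A.walkVertices u l = u :: (A.walkVertices u l).tail := by
  cases l <;> rfl

lemma mem_walkVertices_self (u : A.V) (l : List (A.E × Bool)) : u ∈ A.walkVertices u l := by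
  rw [walkVertices_eq_cons]
  exact List.mem_cons_self

lemma IsWalk.mem_walkVertices {u v : A.V} {l : List (A.E × Bool)} (h : A.IsWalk u v l) :
    v ∈ A.walkVertices u l := by
  induction l generalizing u with
  | nil => simp [walkVertices, show u = v from h]
  | cons p l ih => exact List.mem_cons_of_mem _ (ih h.2)

lemma mem_avoiding_fst_iff (p : A.E × Bool) {z : A.V} :
    p.1 ∈ A.avoiding z ↔ A.stepSrc p ≠ z ∧ A.stepTgt p ≠ z := by
  obtain ⟨e, _ | _⟩ := p <;> simp [avoiding, stepSrc, stepTgt, and_comm]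

lemma IsWalk.reachOn_avoiding {u v z : A.V} {l : List (A.E × Bool)} (h : A.IsWalk u v l)
    (hz : z ∉ A.walkVertices u l) : A.reachOn (A.avoiding z) u v := by
  induction l generalizing u with
  | nil => exact (show u = v from h) ▸ ReflTransGen.refl
  | cons p l ih =>
    obtain ⟨hsrc, hl⟩ := h
    rw [walkVertices, List.mem_cons, not_or, walkVertices_eq_cons, List.mem_cons,
      not_or] at hz
    refine ReflTransGen.head ⟨p.1, (mem_avoiding_fst_iff p).2 ⟨hsrc ▸ Ne.symm hz.1,
      Ne.symm hz.2.1⟩, ?_⟩ (ih hl ?_)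
    · obtain ⟨e, _ | _⟩ := p <;> simp_all [stepSrc, stepTgt]
    · rw [walkVertices_eq_cons, List.mem_cons, not_or]
      exact hz.2

lemma IsWalk.exists_split {u v b : A.V} {l : List (A.E × Bool)} (h : A.IsWalk u v l)
    (hb : b ∈ A.walkVertices u l) :
    ∃ l₁ l₂, A.IsWalk u b l₁ ∧ A.IsWalk b v l₂ ∧
      A.walkVertices u l = A.walkVertices u l₁ ++ (A.walkVertices b l₂).tail := by
  induction l generalizing u with
  | nil =>
    obtain rfl : b = u := by simpa [walkVertices] using hb
    exact ⟨[], [], rfl, h, rfl⟩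
  | cons p l ih =>
    rcases List.mem_cons.1 hb with rfl | hb
    · exact ⟨[], p :: l, rfl, h, rfl⟩
    · obtain ⟨l₁, l₂, h₁, h₂, hl⟩ := ih h.2 hb
      exact ⟨p :: l₁, l₂, ⟨h.1, h₁⟩, h₂, by simp [walkVertices, hl]⟩

lemma IsWalk.endpoints_mem {u v : A.V} {l : List (A.E × Bool)} (h : A.IsWalk u v l)
    {p : A.E × Bool} (hp : p ∈ l) :
    A.src p.1 ∈ A.walkVertices u l ∧ A.tgt p.1 ∈ A.walkVertices u l := by
  induction l generalizing u with
  | nil => simp at hp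
  | cons q l ih =>
    rcases List.mem_cons.1 hp with rfl | hp
    · have hsrc : A.stepSrc p ∈ A.walkVertices u (p :: l) := h.1 ▸ List.mem_cons_self
      have htgt : A.stepTgt p ∈ A.walkVertices u (p :: l) := by
        rw [walkVertices, walkVertices_eq_cons]; simp
      obtain ⟨e, _ | _⟩ := p
      exacts [⟨htgt, hsrc⟩, ⟨hsrc, htgt⟩]
    · obtain ⟨hs, ht⟩ := ih h.2 hp
      exact ⟨List.mem_cons_of_mem _ hs, List.mem_cons_of_mem _ ht⟩

lemma IsWalk.stepSrc_ne_stepTgt {u v : A.V} {l : List (A.E × Bool)} (h : A.IsWalk u v l)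
    (hnd : (A.walkVertices u l).Nodup) {p : A.E × Bool} (hp : p ∈ l) :
    A.stepSrc p ≠ A.stepTgt p := by
  induction l generalizing u with
  | nil => simp at hp
  | cons q l ih =>
    rw [walkVertices, List.nodup_cons] at hnd
    rcases List.mem_cons.1 hp with rfl | hp
    · rw [h.1]
      rintro rfl
      exact hnd.1 (mem_walkVertices_self _ _)
    · exact ih h.2 hnd.2 hp

end Walks

section STGraphs

lemma IsSTGraph.src_ne_tgt (hst : A.IsSTGraph) (e : A.E) : A.src e ≠ A.tgt e := by
  obtain ⟨l, hw, hnd, dir, hmem⟩ := hst e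
  have := hw.stepSrc_ne_stepTgt hnd hmem
  cases dir
  exacts [Ne.symm this, this]

lemma s_eq_t_iff_isEmpty (hA : A.Connected) (hst : A.IsSTGraph) : A.s = A.t ↔ IsEmpty A.E := by
  refine ⟨fun hts => ⟨fun e => ?_⟩, fun _ => hA.eq_of_isEmpty _ _⟩
  obtain ⟨l, hw, hnd, dir, hmem⟩ := hst e
  cases l with
  | nil => simp at hmem
  | cons p l =>
    rw [walkVertices, List.nodup_cons] at hnd
    exact hnd.1 (hts ▸ hw.2.mem_walkVertices)

lemma iso_of_isEmpty (hB : B.Connected) (hC : C.Connected) [IsEmpty B.E] [IsEmpty C.E] :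
    B.Iso C :=
  ⟨⟨fun _ => C.s, fun _ => B.s, fun _ => hB.eq_of_isEmpty _ _, fun _ => hC.eq_of_isEmpty _ _⟩,
    Equiv.equivOfIsEmpty _ _, isEmptyElim, isEmptyElim, rfl, hC.eq_of_isEmpty _ _⟩

lemma IsSTGraph.exists_path_through (hA : A.Connected) (hst : A.IsSTGraph) (b : A.V) :
    ∃ l, A.IsWalk A.s A.t l ∧ (A.walkVertices A.s l).Nodup ∧ b ∈ A.walkVertices A.s l := by
  have through_endpoint : ∀ e, A.src e = b ∨ A.tgt e = b →
      ∃ l, A.IsWalk A.s A.t l ∧ (A.walkVertices A.s l).Nodup ∧ b ∈ A.walkVertices A.s l := by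
    rintro e he
    obtain ⟨l, hw, hnd, dir, hmem⟩ := hst e
    obtain ⟨hs, ht⟩ := hw.endpoints_mem hmem
    exact ⟨l, hw, hnd, by rcases he with rfl | rfl; exacts [hs, ht]⟩
  by_cases hbt : b = A.t
  · by_cases hts : A.s = A.t
    · exact ⟨[], hts, by simp [walkVertices], by simp [walkVertices, hbt, hts]⟩
    · obtain ⟨e, he⟩ := hA.exists_incident (Ne.symm hts)
      exact through_endpoint e (hbt ▸ he)
  · obtain ⟨e, he⟩ := hA.exists_incident hbt
    exact through_endpoint e he

lemma IsSTGraph.reachOn_avoiding_s (hA : A.Connected) (hst : A.IsSTGraph) {b : A.V}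
    (hb : b ≠ A.s) : A.reachOn (A.avoiding A.s) b A.t := by
  obtain ⟨l, hw, hnd, hmem⟩ := hst.exists_path_through hA b
  obtain ⟨l₁, l₂, -, h₂, hl⟩ := hw.exists_split hmem
  refine h₂.reachOn_avoiding ?_
  rw [walkVertices_eq_cons, List.mem_cons, not_or]
  refine ⟨Ne.symm hb, fun hs => ?_⟩
  rw [hl, List.nodup_append] at hnd
  exact hnd.2.2 _ (mem_walkVertices_self _ _) _ hs rfl

lemma IsSTGraph.reachOn_avoiding_t (hA : A.Connected) (hst : A.IsSTGraph) {b : A.V}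
    (hb : b ≠ A.t) : A.reachOn (A.avoiding A.t) b A.s := by
  obtain ⟨l, hw, hnd, hmem⟩ := hst.exists_path_through hA b
  obtain ⟨l₁, l₂, h₁, h₂, hl⟩ := hw.exists_split hmem
  refine reachOn_symm (h₁.reachOn_avoiding fun ht => ?_)
  have ht' : A.t ∈ (A.walkVertices b l₂).tail := by
    have := h₂.mem_walkVertices
    rw [walkVertices_eq_cons, List.mem_cons] at this
    exact this.resolve_left (Ne.symm hb)
  rw [hl, List.nodup_append] at hnd
  exact hnd.2.2 _ ht _ ht' rfl

end STGraphs

section Sum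

def addInl (a : A.V) : (A.add B).V := Quot.mk _ (Sum.inl a)

def addInr (b : B.V) : (A.add B).V := Quot.mk _ (Sum.inr b)

def glue (A B : FlowGraph) : (A.add B).V := addInr B.s

@[simp] lemma add_src_inl (e : A.E) : (A.add B).src (Sum.inl e) = addInl (A.src e) := rfl

@[simp] lemma add_tgt_inl (e : A.E) : (A.add B).tgt (Sum.inl e) = addInl (A.tgt e) := rfl

@[simp] lemma add_src_inr (e : B.E) : (A.add B).src (Sum.inr e) = addInr (B.src e) := rfl

@[simp] lemma add_tgt_inr (e : B.E) : (A.add B).tgt (Sum.inr e) = addInr (B.tgt e) := rfl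

lemma add_s : (A.add B).s = addInl A.s := rfl

lemma addInl_t : (addInl A.t : (A.add B).V) = glue A B := Quot.sound ⟨rfl, rfl⟩

open Classical in
/-- A complete invariant of the gluing: each representative is sent to the one on the `B` side. -/
noncomputable def addNormal (A B : FlowGraph) (x : A.V ⊕ B.V) : A.V ⊕ B.V :=
  if x = Sum.inl A.t then Sum.inr B.s else x

lemma mk_addNormal (x : A.V ⊕ B.V) :
    Quot.mk (addRel A B) (addNormal A B x) = Quot.mk (addRel A B) x := by
  unfold addNormal
  split_ifs with hx
  · exact hx ▸ (Quot.sound ⟨rfl, rfl⟩).symm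
  · rfl

lemma add_mk_eq_mk_iff {x y : A.V ⊕ B.V} :
    Quot.mk (addRel A B) x = Quot.mk (addRel A B) y ↔ addNormal A B x = addNormal A B y := by
  refine ⟨fun h => ?_, fun h => by rw [← mk_addNormal x, h, mk_addNormal]⟩
  refine congrArg (Quot.lift (addNormal A B) ?_) h
  rintro _ _ ⟨rfl, rfl⟩
  simp [addNormal]

lemma addInl_injective : Function.Injective (addInl : A.V → (A.add B).V) := by
  intro a a' h
  replace h := add_mk_eq_mk_iff.1 h
  by_cases ha : a = A.t <;> by_cases ha' : a' = A.t <;> simp_all [addNormal]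

lemma addInr_injective : Function.Injective (addInr : B.V → (A.add B).V) := by
  intro b b' h
  replace h := add_mk_eq_mk_iff.1 h
  simpa [addNormal] using h

lemma addInl_eq_addInr_iff {a : A.V} {b : B.V} :
    (addInl a : (A.add B).V) = addInr b ↔ a = A.t ∧ b = B.s := by
  refine add_mk_eq_mk_iff.trans ?_
  by_cases ha : a = A.t <;> simp [addNormal, ha, eq_comm]

lemma add_vertex_cases (v : (A.add B).V) : (∃ a, v = addInl a) ∨ ∃ b, v = addInr b := by
  induction v using Quot.ind with
  | mk x => rcases x with a | b; exacts [Or.inl ⟨a, rfl⟩, Or.inr ⟨b, rfl⟩]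

lemma addInr_mem_range_addInl_iff {b : B.V} :
    (addInr b : (A.add B).V) ∈ range addInl ↔ b = B.s :=
  ⟨fun ⟨_, ha⟩ => (addInl_eq_addInr_iff.1 ha).2, fun h => ⟨A.t, h ▸ addInl_t⟩⟩

lemma addInl_mem_range_addInr_iff {a : A.V} :
    (addInl a : (A.add B).V) ∈ range addInr ↔ a = A.t :=
  ⟨fun ⟨_, hb⟩ => (addInl_eq_addInr_iff.1 hb.symm).1, fun h => ⟨B.s, (h ▸ addInl_t).symm⟩⟩

def embInl (A B : FlowGraph) : Emb A (A.add B) :=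
  ⟨addInl, Sum.inl, addInl_injective, Sum.inl_injective, fun _ => rfl, fun _ => rfl⟩

def embInr (A B : FlowGraph) : Emb B (A.add B) :=
  ⟨addInr, Sum.inr, addInr_injective, Sum.inr_injective, fun _ => rfl, fun _ => rfl⟩

lemma mem_range_addInl_of_reachOn_avoiding_glue {u v : (A.add B).V}
    (h : (A.add B).reachOn ((A.add B).avoiding (glue A B)) u v) (hu : u ∈ range addInl) :
    v ∈ range addInl := by
  refine reachOn_mem_of_forall_iff (fun e he => ?_) h hu
  rcases e with e | e
  · exact iff_of_true ⟨_, rfl⟩ ⟨_, rfl⟩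
  · refine iff_of_false (fun hs => he.1 ?_) (fun ht => he.2 ?_)
    · rw [add_src_inr, addInr_mem_range_addInl_iff.1 hs]; rfl
    · rw [add_tgt_inr, addInr_mem_range_addInl_iff.1 ht]; rfl

lemma mem_range_addInr_of_reachOn_avoiding_glue {u v : (A.add B).V}
    (h : (A.add B).reachOn ((A.add B).avoiding (glue A B)) u v) (hu : u ∈ range addInr) :
    v ∈ range addInr := by
  refine reachOn_mem_of_forall_iff (fun e he => ?_) h hu
  rcases e with e | e
  · refine iff_of_false (fun hs => he.1 ?_) (fun ht => he.2 ?_)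
    · rw [add_src_inl, addInl_mem_range_addInr_iff.1 hs, addInl_t]
    · rw [add_tgt_inl, addInl_mem_range_addInr_iff.1 ht, addInl_t]
  · exact iff_of_true ⟨_, rfl⟩ ⟨_, rfl⟩

end Sum

section GlueCut

lemma glue_ne_t (hB : B.s ≠ B.t) : glue A B ≠ (A.add B).t :=
  fun h => hB (addInr_injective h)

lemma glue_ne_s (hA : A.s ≠ A.t) : glue A B ≠ (A.add B).s :=
  fun h => hA (addInl_eq_addInr_iff.1 h.symm).1

lemma addInl_mem_cutOff_glue_t (hB : B.s ≠ B.t) (a : A.V) :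
    addInl a ∈ (A.add B).cutOff (glue A B) (A.add B).t := fun h =>
  hB (addInr_mem_range_addInl_iff.1 (mem_range_addInl_of_reachOn_avoiding_glue h ⟨a, rfl⟩)).symm

lemma addInr_mem_cutOff_glue_s (hA : A.s ≠ A.t) (b : B.V) :
    addInr b ∈ (A.add B).cutOff (glue A B) (A.add B).s := fun h =>
  hA (addInl_mem_range_addInr_iff.1 (mem_range_addInr_of_reachOn_avoiding_glue h ⟨b, rfl⟩))

lemma addInr_mem_cutOff_glue_t_iff (hB : B.Connected) (hBst : B.IsSTGraph) (hBne : B.s ≠ B.t)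
    {b : B.V} : addInr b ∈ (A.add B).cutOff (glue A B) (A.add B).t ↔ b = B.s := by
  refine ⟨fun h => by_contra fun hb => h ?_, fun hb => hb ▸ self_mem_cutOff (glue_ne_t hBne)⟩
  exact (embInr A B).reachOn_avoiding (fun _ hy => addInr_injective hy)
    (hBst.reachOn_avoiding_s hB hb)

lemma addInl_mem_cutOff_glue_s_iff (hA : A.Connected) (hAst : A.IsSTGraph) (hAne : A.s ≠ A.t)
    {a : A.V} : addInl a ∈ (A.add B).cutOff (glue A B) (A.add B).s ↔ a = A.t := by
  refine ⟨fun h => by_contra fun ha => h ?_,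
    fun ha => by rw [ha, addInl_t]; exact self_mem_cutOff (glue_ne_s hAne)⟩
  exact (embInl A B).reachOn_avoiding (fun _ hy => addInl_injective (hy.trans addInl_t.symm))
    (hAst.reachOn_avoiding_t hA ha)

lemma cutOffEdges_glue_t (hB : B.Connected) (hBst : B.IsSTGraph) (hBne : B.s ≠ B.t) :
    (A.add B).cutOffEdges (glue A B) (A.add B).t = range Sum.inl := by
  ext (e | e)
  · exact iff_of_true ⟨addInl_mem_cutOff_glue_t hBne _, addInl_mem_cutOff_glue_t hBne _⟩ ⟨e, rfl⟩
  · refine iff_of_false (fun ⟨hs, ht⟩ => hBst.src_ne_tgt e ?_) fun ⟨_, h⟩ => Sum.inl_ne_inr h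
    rw [(addInr_mem_cutOff_glue_t_iff hB hBst hBne).1 hs,
      (addInr_mem_cutOff_glue_t_iff hB hBst hBne).1 ht]

lemma cutOffEdges_glue_s (hA : A.Connected) (hAst : A.IsSTGraph) (hAne : A.s ≠ A.t) :
    (A.add B).cutOffEdges (glue A B) (A.add B).s = range Sum.inr := by
  ext (e | e)
  · refine iff_of_false (fun ⟨hs, ht⟩ => hAst.src_ne_tgt e ?_) fun ⟨_, h⟩ => Sum.inr_ne_inl h
    rw [(addInl_mem_cutOff_glue_s_iff hA hAst hAne).1 hs,
      (addInl_mem_cutOff_glue_s_iff hA hAst hAne).1 ht]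
  · exact iff_of_true ⟨addInr_mem_cutOff_glue_s hAne _, addInr_mem_cutOff_glue_s hAne _⟩ ⟨e, rfl⟩

lemma cutOffEdges_addInl_t_ssubset (hA : A.Connected) (hAne : A.s ≠ A.t) (hC : C.Connected)
    {a : A.V} (ha : a ≠ A.t) :
    (A.add C).cutOffEdges (addInl a) (A.add C).t ⊂ range Sum.inl := by
  have hC_reach (c : C.V) : addInr c ∉ (A.add C).cutOff (addInl a) (A.add C).t := fun h =>
    h ((embInr A C).reachOn_avoiding_of_forall_ne
      (fun _ hc => ha (addInl_eq_addInr_iff.1 hc.symm).1) (hC c C.t))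
  have hsub : (A.add C).cutOffEdges (addInl a) (A.add C).t ⊆ range Sum.inl := by
    rintro (e | e) ⟨hs, -⟩
    exacts [⟨e, rfl⟩, absurd hs (hC_reach _)]
  obtain ⟨e, he⟩ := hA.exists_incident (Ne.symm hAne)
  refine (ssubset_iff_of_subset hsub).2 ⟨Sum.inl e, ⟨e, rfl⟩, fun ⟨hs, ht⟩ => ?_⟩
  have hglue : addInl A.t ∉ (A.add C).cutOff (addInl a) (A.add C).t := by
    rw [addInl_t]
    exact hC_reach C.s
  rcases he with he | he
  · rw [add_src_inl, he] at hs
    exact hglue hs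
  · rw [add_tgt_inl, he] at ht
    exact hglue ht

lemma cutOffEdges_addInr_s_ssubset (hA : A.Connected) (hC : C.Connected) (hCne : C.s ≠ C.t)
    {c : C.V} (hc : c ≠ C.s) :
    (A.add C).cutOffEdges (addInr c) (A.add C).s ⊂ range Sum.inr := by
  have hA_reach (a : A.V) : addInl a ∉ (A.add C).cutOff (addInr c) (A.add C).s := fun h =>
    h ((embInl A C).reachOn_avoiding_of_forall_ne
      (fun _ ha => hc (addInl_eq_addInr_iff.1 ha).2) (hA a A.s))
  have hsub : (A.add C).cutOffEdges (addInr c) (A.add C).s ⊆ range Sum.inr := by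
    rintro (e | e) ⟨hs, -⟩
    exacts [absurd hs (hA_reach _), ⟨e, rfl⟩]
  obtain ⟨e, he⟩ := hC.exists_incident hCne
  refine (ssubset_iff_of_subset hsub).2 ⟨Sum.inr e, ⟨e, rfl⟩, fun ⟨hs, ht⟩ => ?_⟩
  have hglue := hA_reach A.t
  rw [addInl_t] at hglue
  rcases he with he | he
  · rw [add_src_inr, he] at hs
    exact hglue hs
  · rw [add_tgt_inr, he] at ht
    exact hglue ht

end GlueCut

section Cancel

lemma GraphIso.natCard_edges_eq (φ : GraphIso (A.add B) (A.add C)) :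
    Nat.card B.E = Nat.card C.E := by
  have h : Nat.card (A.E ⊕ B.E) = Nat.card (A.E ⊕ C.E) := Nat.card_congr φ.eEquiv
  rw [Nat.card_sum, Nat.card_sum] at h
  omega

lemma GraphIso.map_glue_ne_addInl (φ : GraphIso (A.add B) (A.add C))
    (hφt : φ.vEquiv (A.add B).t = (A.add C).t) (hA : A.Connected) (hAne : A.s ≠ A.t)
    (hB : B.Connected) (hBst : B.IsSTGraph) (hBne : B.s ≠ B.t) (hC : C.Connected)
    {a : A.V} (ha : a ≠ A.t) : φ.vEquiv (glue A B) ≠ addInl a := by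
  intro hφ
  have hcard := φ.ncard_cutOffEdges (glue A B) (A.add B).t
  rw [hφ, hφt, cutOffEdges_glue_t hB hBst hBne] at hcard
  have hlt := ncard_lt_ncard (cutOffEdges_addInl_t_ssubset hA hAne hC ha)
  exact (hlt.trans_eq (ncard_range_of_injective Sum.inl_injective)).ne
    (hcard.trans (ncard_range_of_injective Sum.inl_injective))

lemma GraphIso.map_glue_ne_addInr (φ : GraphIso (A.add B) (A.add C))
    (hφs : φ.vEquiv (A.add B).s = (A.add C).s) (hA : A.Connected) (hAst : A.IsSTGraph)
    (hAne : A.s ≠ A.t) (hC : C.Connected) (hCne : C.s ≠ C.t)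
    {c : C.V} (hc : c ≠ C.s) : φ.vEquiv (glue A B) ≠ addInr c := by
  intro hφ
  have hcard := φ.ncard_cutOffEdges (glue A B) (A.add B).s
  rw [hφ, hφs, cutOffEdges_glue_s hA hAst hAne] at hcard
  have hlt := ncard_lt_ncard (cutOffEdges_addInr_s_ssubset hA hC hCne hc)
  exact (hlt.trans_eq (ncard_range_of_injective Sum.inr_injective)).ne
    ((hcard.trans (ncard_range_of_injective Sum.inr_injective)).trans φ.natCard_edges_eq)

lemma GraphIso.map_glue (φ : GraphIso (A.add B) (A.add C))
    (hφs : φ.vEquiv (A.add B).s = (A.add C).s) (hφt : φ.vEquiv (A.add B).t = (A.add C).t)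
    (hA : A.Connected) (hAst : A.IsSTGraph) (hB : B.Connected) (hBst : B.IsSTGraph)
    (hBne : B.s ≠ B.t) (hC : C.Connected) (hCne : C.s ≠ C.t) :
    φ.vEquiv (glue A B) = glue A C := by
  by_cases hAts : A.s = A.t
  · have hs (D : FlowGraph) : (A.add D).s = glue A D := by rw [add_s, hAts, addInl_t]
    rw [← hs B, hφs, hs C]
  rcases add_vertex_cases (φ.vEquiv (glue A B)) with ⟨a, ha⟩ | ⟨c, hc⟩
  · by_cases hat : a = A.t
    · rw [ha, hat, addInl_t]
    · exact absurd ha (φ.map_glue_ne_addInl hφt hA hAts hB hBst hBne hC hat)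
  · by_cases hcs : c = C.s
    · rw [hc, hcs]
      rfl
    · exact absurd hc (φ.map_glue_ne_addInr hφs hA hAst hAts hC hCne hcs)

lemma mem_range_addInr_iff (hB : B.Connected) (hBst : B.IsSTGraph) (hBne : B.s ≠ B.t)
    (v : (A.add B).V) :
    v ∈ range addInr ↔ v = glue A B ∨ v ∉ (A.add B).cutOff (glue A B) (A.add B).t := by
  rcases add_vertex_cases v with ⟨a, rfl⟩ | ⟨b, rfl⟩
  · rw [addInl_mem_range_addInr_iff, or_iff_left (not_not.2 (addInl_mem_cutOff_glue_t hBne a)),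
      ← addInl_t, addInl_injective.eq_iff]
  · rw [addInr_mem_cutOff_glue_t_iff hB hBst hBne, glue, addInr_injective.eq_iff]
    exact iff_of_true ⟨b, rfl⟩ (em _)

lemma GraphIso.iso_of_map_glue (φ : GraphIso (A.add B) (A.add C))
    (hφt : φ.vEquiv (A.add B).t = (A.add C).t) (hglue : φ.vEquiv (glue A B) = glue A C)
    (hB : B.Connected) (hBst : B.IsSTGraph) (hBne : B.s ≠ B.t)
    (hC : C.Connected) (hCst : C.IsSTGraph) (hCne : C.s ≠ C.t) : B.Iso C := by
  have hV (v : (A.add B).V) : v ∈ range addInr ↔ φ.vEquiv v ∈ range addInr := by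
    rw [mem_range_addInr_iff hB hBst hBne, mem_range_addInr_iff hC hCst hCne, ← hglue, ← hφt,
      φ.mem_cutOff_iff, φ.vEquiv.apply_eq_iff_eq]
  have hE (e : (A.add B).E) : e ∈ range Sum.inr ↔ φ.eEquiv e ∈ range Sum.inr := by
    rw [← compl_range_inl, ← compl_range_inl, ← cutOffEdges_glue_t hB hBst hBne,
      ← cutOffEdges_glue_t hC hCst hCne, ← hglue, ← hφt]
    exact not_congr φ.mem_cutOffEdges_iff.symm
  let ψV := Equiv.ofRangesMatch addInr_injective addInr_injective φ.vEquiv hV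
  let ψE := Equiv.ofRangesMatch Sum.inr_injective Sum.inr_injective φ.eEquiv hE
  have hψV (b : B.V) : addInr (ψV b) = φ.vEquiv (addInr b) := Equiv.apply_ofRangesMatch ..
  have hψE (e : B.E) : Sum.inr (ψE e) = φ.eEquiv (Sum.inr e) := Equiv.apply_ofRangesMatch ..
  have hinj := addInr_injective (A := A) (B := C)
  refine ⟨ψV, ψE, fun e => hinj ?_, fun e => hinj ?_, hinj ?_, hinj ?_⟩
  · rw [hψV, ← add_src_inr, hψE]
    exact φ.src_map _
  · rw [hψV, ← add_tgt_inr, hψE]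
    exact φ.tgt_map _
  · exact (hψV B.s).trans hglue
  · exact (hψV B.t).trans hφt

end Cancel

end FlowGraph

open FlowGraph in
/-- Left-cancellation law for `⊕` on st-flow graphs. -/
theorem flowGraph_add_left_cancel (A B C : FlowGraph)
    (hA : A.Connected) (hB : B.Connected) (hC : C.Connected)
    (hAst : A.IsSTGraph) (hBst : B.IsSTGraph) (hCst : C.IsSTGraph)
    (h : (A.add B).Iso (A.add C)) :
    B.Iso C := by
  obtain ⟨φV, φE, hsrc, htgt, hφs, hφt⟩ := h
  let φ : GraphIso (A.add B) (A.add C) := ⟨φV, φE, hsrc, htgt⟩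
  have hst : B.s = B.t ↔ C.s = C.t := by
    rw [s_eq_t_iff_isEmpty hB hBst, s_eq_t_iff_isEmpty hC hCst, ← Finite.card_eq_zero_iff,
      ← Finite.card_eq_zero_iff, φ.natCard_edges_eq]
  rcases eq_or_ne B.s B.t with hBts | hBne
  · have := (s_eq_t_iff_isEmpty hB hBst).1 hBts
    have := (s_eq_t_iff_isEmpty hC hCst).1 (hst.1 hBts)
    exact iso_of_isEmpty hB hC
  have hCne : C.s ≠ C.t := mt hst.2 hBne
  exact φ.iso_of_map_glue hφt (φ.map_glue hφs hφt hA hAst hB hBst hBne hC hCne)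
    hB hBst hBne hC hCst hCne
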